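/- arXiv:2308.00790 — 5 statements merged into one kernel-verified Lean document; each statement's English description precedes it below -/
import Mathlib

section
/- Let K be an infinite field and Γ = {α_1, …, α_n} a finite group of field automorphisms of K, and let v be a positive integer. Then the family of functions x_i∘α_j : K^v → K, (k_1, …, k_v) ↦ α_j(k_i), indexed by the pairs (i,j) with 1 ≤ i ≤ v and 1 ≤ j ≤ n, is algebraically independent over K in the K-algebra of K-valued functions on K^v; equivalently, the K-algebra homomorphism from the multivariate polynomial ring over K in the n·v variables y_{ji} to the algebra of functions K^v → K sending y_{ji} to x_i∘α_j is injective. -/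
/-!
Let `F` be the fixed field of `Γ` and `b` an `F`-basis of `K`; by Artin, `[K : F] = n` and the
`α_j` are exactly the `F`-embeddings `K → K`. Writing `k_i = ∑_t c_{it} b_t` with `c_{it} ∈ F`
gives `α_j(k_i) = ∑_t c_{it} α_j(b_t)`, so a polynomial `p` vanishing on all the points
`(α_j(k_i))` vanishes after the linear substitution by the matrix `(α_j(b_t))` on the box
`F^{v × n}`. That matrix is invertible by Dedekind's independence of characters and `F` is
infinite because `K` is, so `p = 0`.
-/

/-- The functions `x_i ∘ α_j : K^v → K`, `(k_1, …, k_v) ↦ α_j(k_i)`. -/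
def conjFn {K : Type*} [Field K] {n v : ℕ} (α : Fin n → RingAut K)
    (p : Fin v × Fin n) : (Fin v → K) → K :=
  fun k => α p.2 (k p.1)

open MvPolynomial Matrix

namespace Algebra

variable {F A B ι : Type*} [CommRing F] [CommRing A] [Algebra F A] [CommRing B] [Algebra F B]
  [Fintype ι]

theorem vecMul_embeddingsMatrixReindex_apply (b : ι → A) (σ : ι ≃ (A →ₐ[F] B)) (c : ι → F)
    (j : ι) :
    (algebraMap F B ∘ c ᵥ* embeddingsMatrixReindex F B b σ) j = σ j (∑ t, c t • b t) := by
  simp [vecMul, dotProduct, embeddingsMatrixReindex, Algebra.smul_def]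

theorem det_embeddingsMatrixReindex_ne_zero [IsDomain B] [DecidableEq ι]
    (b : Module.Basis ι F A) (σ : ι ≃ (A →ₐ[F] B)) :
    (embeddingsMatrixReindex F B b σ).det ≠ 0 := by
  intro hdet
  obtain ⟨c, hc0, hc⟩ := exists_mulVec_eq_zero_iff.mpr hdet
  have hsum : ∑ j, c j • (σ j).toLinearMap = 0 := b.ext fun t => by
    simpa [embeddingsMatrixReindex, mulVec, dotProduct, mul_comm] using congrFun hc t
  exact hc0 (funext <| Fintype.linearIndependent_iff.mp
    ((linearIndependent_toLinearMap F A B).comp σ σ.injective) c hsum)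

end Algebra

theorem MvPolynomial.eq_zero_of_forall_eval_vecMul_algebraMap {F K ι κ : Type*} [Field F]
    [Infinite F] [Field K] [Algebra F K] [Fintype κ] [DecidableEq κ] {M : Matrix κ κ K}
    (hM : IsUnit M.det) {p : MvPolynomial (ι × κ) K}
    (h : ∀ c : ι → κ → F, eval (fun s => (algebraMap F K ∘ c s.1 ᵥ* M) s.2) p = 0) :
    p = 0 := by
  have : Infinite K := .of_injective _ (algebraMap F K).injective
  set q := aeval (fun s : ι × κ => ∑ t, X (s.1, t) * C (M t s.2)) p
  have eval_q (z : ι × κ → K) :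
      eval z q = eval (fun s => ((fun t => z (s.1, t)) ᵥ* M) s.2) p := by
    calc eval z q = aeval (fun s => aeval z (∑ t, X (s.1, t) * C (M t s.2))) p :=
          comp_aeval_apply _ (aeval z) p
      _ = _ := by simp [vecMul, dotProduct]
  have hq : q = 0 := by
    refine funext_set (fun _ => Set.range (algebraMap F K))
      (fun _ => Set.infinite_range_of_injective (algebraMap F K).injective) fun z hz => ?_
    choose c hc using Set.mem_univ_pi.mp hz
    obtain rfl : z = algebraMap F K ∘ c := _root_.funext fun s => (hc s).symm
    rw [eval_q]
    exact h fun i t => c (i, t)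
  -- every point is `z ᵥ* M` for `z = y ᵥ* M⁻¹`
  refine funext fun y => ?_
  have := eval_q (fun s => ((fun t => y (s.1, t)) ᵥ* M⁻¹) s.2)
  simp only [hq, map_zero, vecMul_vecMul, nonsing_inv_mul _ hM, vecMul_one] at this
  simpa using this.symm

theorem conjFns_algebraicIndependent_general (K : Type*) [Field K] [Infinite K]
    (n v : ℕ) (Γ : Subgroup (RingAut K)) (e : Fin n ≃ Γ) :
    AlgebraicIndependent K (conjFn (fun j => (e j : RingAut K)) (v := v)) := by
  have : Fintype Γ := .ofEquiv _ e
  let F := FixedPoints.subfield Γ K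
  let σ : Fin n ≃ (K →ₐ[F] K) := e.trans (FixedPoints.toAlgHomEquiv Γ K)
  have : Infinite F := not_finite_iff_infinite.mp fun _ =>
    @not_finite K _ (Module.finite_of_finite F)
  let b : Module.Basis (Fin n) F K := Module.finBasisOfFinrankEq F K
    (by rw [FixedPoints.finrank_eq_card, Fintype.card_congr e.symm, Fintype.card_fin])
  refine algebraicIndependent_iff.mpr fun p hp => eq_zero_of_forall_eval_vecMul_algebraMap (F := F)
    (isUnit_iff_ne_zero.mpr (Algebra.det_embeddingsMatrixReindex_ne_zero b σ)) fun c => ?_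
  let k : Fin v → K := fun i => ∑ t, c i t • b t
  calc _ = Pi.evalAlgHom K (fun _ => K) k (aeval (conjFn (fun j => (e j : RingAut K))) p) := by
        rw [comp_aeval_apply]
        exact congrArg (fun x => aeval x p)
          (funext fun s => Algebra.vecMul_embeddingsMatrixReindex_apply b σ (c s.1) s.2)
    _ = 0 := by rw [hp, map_zero]

/-- Let `K` be an infinite field and `Γ = {α_1, …, α_n}` a finite group of field
automorphisms of `K`, and `v` a positive integer.  Then the family of functions
`x_i ∘ α_j : K^v → K` is algebraically independent over `K` in the `K`-algebra of
`K`-valued functions on `K^v`. -/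
theorem conjFns_algebraicIndependent (K : Type*) [Field K] [Infinite K]
    (n v : ℕ) (hv : 0 < v) (Γ : Subgroup (RingAut K)) [Finite Γ] (e : Fin n ≃ Γ) :
    AlgebraicIndependent K (conjFn (fun j => (e j : RingAut K)) (v := v)) :=
  conjFns_algebraicIndependent_general K n v Γ e
end

section
/- Let K be an infinite field, Γ = {α_1, …, α_n} a finite group of field automorphisms of K, and v a positive integer. Fix (d_1, …, d_n) ∈ ℕ^n. Then the Γ-conjugate monomials M(m), as m = (m_{ij}) ranges over all matrices in ℕ^{v×n} with ∑_{i=1}^v m_{ij} = d_j for every j, are linearly independent over K in the algebra of functions K^v → K, and the K-dimension of their span equals ∏_{j=1}^n binom(d_j + v − 1, d_j). -/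
/-!
Each `M(m)` is a monoid homomorphism `(K^v, ·) → (K, ·)`, so by Dedekind–Artin independence of
characters it suffices that distinct exponent matrices give distinct functions. Restricting to
points with a single non-unit coordinate `x`, this reduces to: `x ↦ ∏_j α_j(x)^{c_j}` determines
`c`. Let `F = K^Γ`, which is infinite since `K/F` is finite, and let `b` be a primitive element of
`K/F`, so that the `α_j b` are distinct. For `t ∈ F`, `∏_j α_j(t - b)^{c_j} = ∏_j (t - α_j b)^{c_j}`,
so the polynomial `∏_j (X - α_j b)^{c_j}`, and with it `c` through its root multiplicities, is
determined by the function.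
-/

/-- The `Γ`-conjugate monomial `M(m) : K^v → K` associated to an exponent matrix
`m = (m_{ij})`, namely `M(m)(k_1,…,k_v) = ∏_{j=1}^n ∏_{i=1}^v α_j(k_i)^{m_{ij}}`. -/
def conjMonomial {K : Type*} [Field K] {n v : ℕ} (α : Fin n → RingAut K)
    (m : Fin v → Fin n → ℕ) : (Fin v → K) → K :=
  fun k => ∏ j : Fin n, ∏ i : Fin v, (α j (k i)) ^ (m i j)

open Polynomial Function

theorem Polynomial.roots_prod_X_sub_C_pow {R ι : Type*} [CommRing R] [IsDomain R] [Fintype ι]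
    (a : ι → R) (c : ι → ℕ) :
    (∏ j, (X - C (a j)) ^ c j).roots = ∑ j, c j • {a j} := by
  rw [roots_prod _ _ (Finset.prod_ne_zero_iff.2 fun j _ => pow_ne_zero _ (X_sub_C_ne_zero _))]
  simp only [roots_pow, roots_X_sub_C]
  rfl

theorem Polynomial.prod_X_sub_C_pow_injective {R ι : Type*} [CommRing R] [IsDomain R]
    [Fintype ι] {a : ι → R} (ha : Injective a) :
    Injective fun c : ι → ℕ => ∏ j, (X - C (a j)) ^ c j := by
  classical
  intro c c' h
  funext k
  have := congrArg (fun p => p.roots.count (a k)) h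
  simpa [roots_prod_X_sub_C_pow, Multiset.count_sum', Multiset.count_singleton, ha.eq_iff]
    using this

theorem AlgEquiv.prod_pow_apply_injective {F K ι : Type*} [Field F] [Field K] [Algebra F K]
    [Infinite F] [FiniteDimensional F K] [Algebra.IsSeparable F K] [Fintype ι]
    {σ : ι → K ≃ₐ[F] K} (hσ : Injective σ) :
    Injective fun (c : ι → ℕ) (x : K) => ∏ j, σ j x ^ c j := by
  intro c c' h
  let pb := Field.powerBasisOfFiniteOfSeparable F K
  have hgen : Injective fun j => σ j pb.gen := fun j k hjk =>
    hσ (AlgEquiv.coe_toAlgHom_injective (pb.algHom_ext hjk))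
  have eval_algebraMap : ∀ (c : ι → ℕ) (t : F),
      (∏ j, (X - C (σ j pb.gen)) ^ c j).eval (algebraMap F K t)
        = ∏ j, σ j (algebraMap F K t - pb.gen) ^ c j := by
    intro c t
    simp [eval_prod, AlgEquiv.commutes]
  refine prod_X_sub_C_pow_injective hgen (eq_of_infinite_eval_eq _ _ ?_)
  refine Set.infinite_of_injective_forall_mem (algebraMap F K).injective fun t => ?_
  simp only [Set.mem_ofPred_eq, eval_algebraMap]
  exact congrFun h _

namespace conjMonomial

variable {K : Type*} [Field K] {n v : ℕ} (α : Fin n → RingAut K)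

def toMonoidHom (m : Fin v → Fin n → ℕ) : (Fin v → K) →* K where
  toFun := conjMonomial α m
  map_one' := by simp [conjMonomial]
  map_mul' k k' := by simp [conjMonomial, mul_pow, Finset.prod_mul_distrib]

theorem apply_update_one (m : Fin v → Fin n → ℕ) (i : Fin v) (x : K) :
    conjMonomial α m (update 1 i x) = ∏ j, α j x ^ m i j := by
  refine Finset.prod_congr rfl fun j _ => ?_
  rw [Finset.prod_eq_single i (fun i' _ hi' => by simp [update_of_ne hi']) (by simp),
    update_self]

variable {α}

theorem injective (hα : Injective fun (c : Fin n → ℕ) (x : K) => ∏ j, α j x ^ c j) :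
    Injective (conjMonomial (v := v) α) := by
  intro m m' h
  funext i
  exact hα (funext fun x => by simpa only [apply_update_one] using congrFun h (update 1 i x))

theorem linearIndependent (hα : Injective fun (c : Fin n → ℕ) (x : K) => ∏ j, α j x ^ c j) :
    LinearIndependent K (conjMonomial (v := v) α) :=
  (linearIndependent_monoidHom (Fin v → K) K).comp (toMonoidHom α)
    fun _ _ h => injective hα (congrArg DFunLike.coe h)

end conjMonomial

noncomputable def colSumEquiv {n v : ℕ} (d : Fin n → ℕ) :
    {m : Fin v → Fin n → ℕ // ∀ j, ∑ i, m i j = d j} ≃ ∀ j, Sym (Fin v) (d j) :=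
  ((Equiv.piComm _).subtypeEquiv fun _ => Iff.rfl).trans <|
    Equiv.subtypePiEquivPi.trans <|
      Equiv.piCongrRight fun j => (Sym.equivNatSumOfFintype (Fin v) (d j)).symm

instance {n v : ℕ} (d : Fin n → ℕ) : Finite {m : Fin v → Fin n → ℕ // ∀ j, ∑ i, m i j = d j} :=
  .of_equiv _ (colSumEquiv d).symm

theorem natCard_colSum {n v : ℕ} (d : Fin n → ℕ) :
    Nat.card {m : Fin v → Fin n → ℕ // ∀ j, ∑ i, m i j = d j}
      = ∏ j, (d j + v - 1).choose (d j) := by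
  simp [Nat.card_congr (colSumEquiv d), Sym.card_sym_eq_choose, add_comm]

theorem conjMonomials_linearIndependent_and_finrank_span_general (K : Type*) [Field K] [Infinite K]
    (n v : ℕ) (Γ : Subgroup (RingAut K)) [Finite Γ] (e : Fin n ≃ Γ)
    (d : Fin n → ℕ) :
    LinearIndependent K
      (fun m : {m : Fin v → Fin n → ℕ // ∀ j, ∑ i : Fin v, m i j = d j} =>
        conjMonomial (fun j => (e j : RingAut K)) m.1) ∧
    Module.finrank K
      ↥(Submodule.span K (Set.range
        (fun m : {m : Fin v → Fin n → ℕ // ∀ j, ∑ i : Fin v, m i j = d j} =>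
          conjMonomial (fun j => (e j : RingAut K)) m.1)))
      = ∏ j : Fin n, (d j + v - 1).choose (d j) := by
  let F := FixedPoints.subfield Γ K
  have : Infinite F := not_finite_iff_infinite.mp fun _ =>
    have := Module.finite_of_finite F (M := K)
    _root_.not_finite K
  let σ j := MulSemiringAction.toAlgAut Γ F K (e j)
  have hσ : Injective σ := (FixedPoints.toAlgAut_bijective Γ K).injective.comp e.injective
  have LI : LinearIndependent K (conjMonomial (v := v) fun j => (e j : RingAut K)) :=
    conjMonomial.linearIndependent (AlgEquiv.prod_pow_apply_injective hσ)
  have LI_sub := LI.comp (Subtype.val : {m // ∀ j, ∑ i, m i j = d j} → _) Subtype.val_injective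
  have := Fintype.ofFinite {m : Fin v → Fin n → ℕ // ∀ j, ∑ i, m i j = d j}
  refine ⟨LI_sub, (finrank_span_eq_card LI_sub).trans ?_⟩
  rw [Fintype.card_eq_nat_card, natCard_colSum]

/-- Let `K` be an infinite field, `Γ = {α_1, …, α_n}` a finite group of field
automorphisms of `K`, `v` a positive integer, and `(d_1, …, d_n) ∈ ℕ^n`.  Then the
`Γ`-conjugate monomials `M(m)`, as `m` ranges over all exponent matrices with
`∑_i m_{ij} = d_j` for every `j`, are linearly independent over `K` in the algebra
of functions `K^v → K`, and the `K`-dimension of their span equals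
`∏_j binom(d_j + v − 1, d_j)`. -/
theorem conjMonomials_linearIndependent_and_finrank_span (K : Type*) [Field K] [Infinite K]
    (n v : ℕ) (hv : 0 < v) (Γ : Subgroup (RingAut K)) [Finite Γ] (e : Fin n ≃ Γ)
    (d : Fin n → ℕ) :
    LinearIndependent K
      (fun m : {m : Fin v → Fin n → ℕ // ∀ j, ∑ i : Fin v, m i j = d j} =>
        conjMonomial (fun j => (e j : RingAut K)) m.1) ∧
    Module.finrank K
      ↥(Submodule.span K (Set.range
        (fun m : {m : Fin v → Fin n → ℕ // ∀ j, ∑ i : Fin v, m i j = d j} =>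
          conjMonomial (fun j => (e j : RingAut K)) m.1)))
      = ∏ j : Fin n, (d j + v - 1).choose (d j) :=
  conjMonomials_linearIndependent_and_finrank_span_general K n v Γ e d
end

section
/- (Doubling construction) Let k be a field, V a finite-dimensional k-vector space, and β a nondegenerate symmetric bilinear form on V. Let C be a subspace of V with C ⊆ C^⊥. Define on V × V the symmetric bilinear form B((x,x'),(y,y')) = β(x,y) − β(x',y'), and define Double(C) = {(d, d+c) : d ∈ C^⊥, c ∈ C}. Then Double(C) is a subspace of V × V and Double(C) equals its own orthogonal complement with respect to B. -/
/-- The orthogonal complement `S^⊥ = {x : β(x,c) = 0 for all c ∈ S}` of a set `S`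
with respect to a bilinear form `β`. -/
def orthSet {k V : Type*} [Field k] [AddCommGroup V] [Module k V]
    (β : LinearMap.BilinForm k V) (S : Set V) : Set V :=
  {x | ∀ c ∈ S, β x c = 0}

/-- The symmetric bilinear form `B((x,x'),(y,y')) = β(x,y) − β(x',y')` on `V × V`. -/
def doubleForm {k V : Type*} [Field k] [AddCommGroup V] [Module k V]
    (β : LinearMap.BilinForm k V) : LinearMap.BilinForm k (V × V) :=
  β.comp (LinearMap.fst k V V) (LinearMap.fst k V V)
    - β.comp (LinearMap.snd k V V) (LinearMap.snd k V V)

/-- (Doubling construction.)  Let `k` be a field, `V` a finite-dimensional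
`k`-vector space, `β` a nondegenerate symmetric bilinear form on `V`, and `C` a
subspace of `V` with `C ⊆ C^⊥`.  Then `Double(C) = {(d, d+c) : d ∈ C^⊥, c ∈ C}` is a
subspace of `V × V` and equals its own orthogonal complement with respect to the
form `B((x,x'),(y,y')) = β(x,y) − β(x',y')`. -/
theorem double_isSelfDual {k V : Type*} [Field k] [AddCommGroup V] [Module k V]
    [FiniteDimensional k V] (β : LinearMap.BilinForm k V)
    (hnd : β.Nondegenerate) (hsymm : ∀ x y, β x y = β y x)
    (C : Submodule k V) (hC : (C : Set V) ⊆ orthSet β (C : Set V)) :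
    ∃ D : Submodule k (V × V),
      (D : Set (V × V)) =
        {p | ∃ d ∈ orthSet β (C : Set V), ∃ c ∈ C, p = (d, d + c)} ∧
      (D : Set (V × V)) = orthSet (doubleForm β) (D : Set (V × V)) := by
  have hrefl : β.IsRefl := fun x y h => by rw [hsymm]; exact h
  set Cp := β.orthogonal C with hCp
  -- orthSet β C = Cp as a set
  have hset : orthSet β (C : Set V) = (Cp : Set V) := by
    ext x
    simp only [orthSet, Set.mem_setOf_eq, hCp, SetLike.mem_coe,
      LinearMap.BilinForm.mem_orthogonal_iff, LinearMap.BilinForm.IsOrtho]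
    constructor
    · intro h n hn; rw [hsymm]; exact h n hn
    · intro h c hc; rw [hsymm]; exact h c hc
  have hCCp : C ≤ Cp := by
    intro c hc
    have := hC hc
    rw [hset] at this; exact this
  -- the doubling map
  let L : V × V →ₗ[k] V × V :=
    { toFun := fun p => (p.1, p.1 + p.2)
      map_add' := by intro p q; simp [Prod.ext_iff]; abel
      map_smul' := by intro a p; simp [Prod.ext_iff, smul_add] }
  refine ⟨Submodule.map L (Cp.prod C), ?_, ?_⟩
  · ext p
    simp only [Submodule.map_coe, Set.mem_image, SetLike.mem_coe, Set.mem_setOf_eq,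
      Submodule.mem_prod, hset]
    constructor
    · rintro ⟨⟨d, c⟩, ⟨hd, hc⟩, rfl⟩
      exact ⟨d, hd, c, hc, rfl⟩
    · rintro ⟨d, hd, c, hc, rfl⟩
      exact ⟨(d, c), ⟨hd, hc⟩, rfl⟩
  · have hDset : (Submodule.map L (Cp.prod C) : Set (V × V)) =
        {p | ∃ d ∈ (Cp : Set V), ∃ c ∈ (C : Set V), p = (d, d + c)} := by
      ext p
      simp only [Submodule.map_coe, Set.mem_image, SetLike.mem_coe, Set.mem_setOf_eq,
        Submodule.mem_prod]
      constructor
      · rintro ⟨⟨d, c⟩, ⟨hd, hc⟩, rfl⟩; exact ⟨d, hd, c, hc, rfl⟩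
      · rintro ⟨d, hd, c, hc, rfl⟩; exact ⟨(d, c), ⟨hd, hc⟩, rfl⟩
    rw [hDset]
    ext p
    simp only [Set.mem_setOf_eq, orthSet, doubleForm, LinearMap.sub_apply,
      LinearMap.compl₁₂_apply, LinearMap.fst_apply, LinearMap.snd_apply]
    constructor
    · rintro ⟨d, hd, c, hc, rfl⟩
      rintro q ⟨d', hd', c', hc', rfl⟩
      have e1 : β d c' = 0 :=
        hrefl _ _ (LinearMap.BilinForm.mem_orthogonal_iff.mp hd c' hc')
      have e2 : β c d' = 0 := LinearMap.BilinForm.mem_orthogonal_iff.mp hd' c hc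
      have e3 : β c c' = 0 := hC hc c' hc'
      simp [map_add, e1, e2, e3]
    · intro h
      obtain ⟨x, y⟩ := p
      have hy : y ∈ Cp := by
        rw [hCp, LinearMap.BilinForm.mem_orthogonal_iff]
        intro c hc
        have h2 := h (0, 0 + c) ⟨0, Submodule.zero_mem _, c, hc, rfl⟩
        simp at h2
        exact hrefl _ _ h2
      have hxy : x - y ∈ C := by
        have hmem : x - y ∈ β.orthogonal Cp := by
          rw [LinearMap.BilinForm.mem_orthogonal_iff]
          intro d hd
          have h2 := h (d, d + 0) ⟨d, hd, 0, Submodule.zero_mem _, rfl⟩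
          simp at h2
          show β d (x - y) = 0
          rw [map_sub, hsymm d x, hsymm d y, h2]
        rw [hCp] at hmem
        rwa [LinearMap.BilinForm.orthogonal_orthogonal hnd hrefl] at hmem
      refine ⟨x, ?_, y - x, ?_, ?_⟩
      · have hx : x = y + (x - y) := by abel
        rw [hx]
        exact Submodule.add_mem _ hy (hCCp hxy)
      · simpa using Submodule.neg_mem _ hxy
      · simp
end

section
/- Let k be a field and N a positive integer. Equip k^N × k^N with the symmetric bilinear form B((x,x'),(y,y')) = ∑_{i=1}^N x_i y_i − ∑_{i=1}^N x'_i y'_i. Suppose C is a subspace of k^N × k^N with C = C^⊥ with respect to B and such that the projection of C onto the first factor is all of k^N. Then there exists a matrix A ∈ k^{N×N} with A·Aᵀ = I_N such that C = {(x, xA) : x ∈ k^N}, where xA denotes the row vector x multiplied by A. -/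
open Matrix
/-- The symmetric bilinear form `B((x,x'),(y,y')) = ∑ x_i y_i − ∑ x'_i y'_i` on
`k^N × k^N` (as a function of two arguments). -/
def hypForm (k : Type*) [Field k] (N : ℕ) :
    ((Fin N → k) × (Fin N → k)) → ((Fin N → k) × (Fin N → k)) → k :=
  fun p q => (∑ i : Fin N, p.1 i * q.1 i) - ∑ i : Fin N, p.2 i * q.2 i

/-!
Choosing preimages of the standard basis vectors under the first projection gives a matrix `A`
whose graph `{(x, xA)}` lies in `C`. Isotropy of `C` on this graph is exactly `A Aᵀ = 1`.
Conversely, if `(x, x') ∈ C` then `(0, x' - xA) ∈ C`, and its orthogonality to the graph says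
`A (x' - xA) = 0`; as `A` is invertible, `x' = xA`.
-/

section GraphOfMatrix

variable {ι R : Type*} [Fintype ι] [DecidableEq ι]

lemma exists_matrix_graph_subset [CommSemiring R] (C : Submodule R ((ι → R) × (ι → R)))
    (hproj : ∀ x : ι → R, ∃ x' : ι → R, (x, x') ∈ C) :
    ∃ A : Matrix ι ι R, ∀ x : ι → R, (x, x ᵥ* A) ∈ C := by
  choose f hf using hproj
  refine ⟨Matrix.of fun i => f (Pi.single i 1), fun x => ?_⟩
  have hx : (x, x ᵥ* Matrix.of fun i => f (Pi.single i 1))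
      = ∑ i, x i • (Pi.single i 1, f (Pi.single i 1)) := by
    ext j <;>
      simp [Matrix.vecMul, dotProduct, Finset.sum_apply, Prod.fst_sum, Prod.snd_sum,
        Pi.single_apply]
  rw [hx]
  exact C.sum_mem fun i _ => C.smul_mem _ (hf _)

lemma eq_zero_of_forall_vecMul_dotProduct_eq_zero [CommSemiring R] {A B : Matrix ι ι R}
    (hBA : B * A = 1) {y : ι → R} (hy : ∀ z, z ᵥ* A ⬝ᵥ y = 0) : y = 0 := by
  have hAy : A *ᵥ y = 0 := dotProduct_eq_zero _ fun z => by
    rw [dotProduct_comm, dotProduct_mulVec, hy]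
  rw [← one_mulVec y, ← hBA, ← mulVec_mulVec, hAy, mulVec_zero]

end GraphOfMatrix

section Isotropic

variable {k : Type*} [Field k] {N : ℕ}

lemma hypForm_eq (p q : (Fin N → k) × (Fin N → k)) :
    hypForm k N p q = p.1 ⬝ᵥ q.1 - p.2 ⬝ᵥ q.2 := rfl

lemma mul_transpose_eq_one_of_isotropic_graph {A : Matrix (Fin N) (Fin N) k}
    (hiso : ∀ x z, hypForm k N (x, x ᵥ* A) (z, z ᵥ* A) = 0) : A * Aᵀ = 1 := by
  ext i j
  have h := hiso (Pi.single i 1) (Pi.single j 1)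
  simp only [hypForm_eq, single_one_vecMul, single_dotProduct, one_mul, sub_eq_zero] at h
  rw [one_apply, ← Pi.single_apply, h]
  rfl

lemma snd_eq_vecMul_of_isotropic {C : Submodule k ((Fin N → k) × (Fin N → k))}
    (hiso : ∀ p ∈ C, ∀ q ∈ C, hypForm k N p q = 0) {A : Matrix (Fin N) (Fin N) k}
    (hA : Aᵀ * A = 1) (hgraph : ∀ x, (x, x ᵥ* A) ∈ C) {p : (Fin N → k) × (Fin N → k)}
    (hp : p ∈ C) : p.2 = p.1 ᵥ* A := by
  have hker : ((0 : Fin N → k), p.2 - p.1 ᵥ* A) ∈ C := by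
    convert C.sub_mem hp (hgraph p.1) using 1
    ext <;> simp
  refine sub_eq_zero.mp (eq_zero_of_forall_vecMul_dotProduct_eq_zero hA fun z => ?_)
  simpa [hypForm_eq, dotProduct_sub, sub_eq_zero, eq_comm] using hiso _ (hgraph z) _ hker

end Isotropic

theorem selfDual_code_with_full_projection_is_graph_general (k : Type*) [Field k]
    (N : ℕ) (C : Submodule k ((Fin N → k) × (Fin N → k)))
    (hsd : (C : Set ((Fin N → k) × (Fin N → k))) = {w | ∀ c ∈ C, hypForm k N w c = 0})
    (hproj : ∀ x : Fin N → k, ∃ x' : Fin N → k, (x, x') ∈ C) :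
    ∃ A : Matrix (Fin N) (Fin N) k, A * Aᵀ = 1 ∧
      (C : Set ((Fin N → k) × (Fin N → k)))
        = {p | ∃ x : Fin N → k, p = (x, Matrix.vecMul x A)} := by
  have hiso : ∀ p ∈ C, ∀ q ∈ C, hypForm k N p q = 0 := fun p hp =>
    (Set.ext_iff.mp hsd p).mp hp
  obtain ⟨A, hgraph⟩ := exists_matrix_graph_subset C hproj
  have hA : A * Aᵀ = 1 :=
    mul_transpose_eq_one_of_isotropic_graph fun x z => hiso _ (hgraph x) _ (hgraph z)
  refine ⟨A, hA, Set.Subset.antisymm (fun p hp => ⟨p.1, ?_⟩) ?_⟩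
  · exact Prod.ext rfl (snd_eq_vecMul_of_isotropic hiso (mul_eq_one_comm.mp hA) hgraph hp)
  · rintro _ ⟨x, rfl⟩
    exact hgraph x

/-- Let `k` be a field, `N` positive, and `C` a subspace of `k^N × k^N` with
`C = C^⊥` with respect to `B((x,x'),(y,y')) = ∑ x_i y_i − ∑ x'_i y'_i`, whose
projection onto the first factor is all of `k^N`.  Then there is a matrix `A` with
`A·Aᵀ = I_N` such that `C = {(x, xA) : x ∈ k^N}` (row-vector convention). -/
theorem selfDual_code_with_full_projection_is_graph (k : Type*) [Field k]
    (N : ℕ) (hN : 0 < N) (C : Submodule k ((Fin N → k) × (Fin N → k)))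
    (hsd : (C : Set ((Fin N → k) × (Fin N → k))) = {w | ∀ c ∈ C, hypForm k N w c = 0})
    (hproj : ∀ x : Fin N → k, ∃ x' : Fin N → k, (x, x') ∈ C) :
    ∃ A : Matrix (Fin N) (Fin N) k, A * Aᵀ = 1 ∧
      (C : Set ((Fin N → k) × (Fin N → k)))
        = {p | ∃ x : Fin N → k, p = (x, Matrix.vecMul x A)} :=
  selfDual_code_with_full_projection_is_graph_general k N C hsd hproj
end

section
/- Let k be a field, V a finite-dimensional k-vector space, and β a nondegenerate symmetric bilinear form on V. Equip V × V with the symmetric bilinear form B((x,x'),(y,y')) = β(x,y) − β(x',y'). Let C be a subspace of V × V with C = C^⊥ with respect to B, and let π_1(C) ⊆ V denote the image of C under the projection onto the first factor. Then {x ∈ V : (x,0) ∈ C} = (π_1(C))^⊥, where the orthogonal complement on the right is taken with respect to β. -/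
/-- Let `k` be a field, `V` a finite-dimensional `k`-vector space, `β` a
nondegenerate symmetric bilinear form on `V`, and `C` a subspace of `V × V` with
`C = C^⊥` with respect to `B((x,x'),(y,y')) = β(x,y) − β(x',y')`.  Then the kernel
of the projection onto the second factor, `{x : (x,0) ∈ C}`, equals the
`β`-orthogonal complement of the image `π_1(C)` of `C` under the projection onto the
first factor. -/
theorem ker_snd_eq_orth_of_proj_fst {k V : Type*} [Field k] [AddCommGroup V]
    [Module k V] [FiniteDimensional k V] (β : LinearMap.BilinForm k V)
    (hnd : β.Nondegenerate) (hsymm : ∀ x y, β x y = β y x)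
    (C : Submodule k (V × V))
    (hsd : (C : Set (V × V)) = orthSet (doubleForm β) (C : Set (V × V))) :
    {x : V | (x, (0 : V)) ∈ C}
      = {x : V | ∀ y : V, (∃ y' : V, (y, y') ∈ C) → β x y = 0} := by
  ext x
  simp only [Set.mem_setOf_eq]
  constructor
  · intro hx y ⟨y', hy⟩
    have hx' : (x, (0 : V)) ∈ orthSet (doubleForm β) (C : Set (V × V)) := hsd ▸ hx
    have := hx' (y, y') hy
    simpa [doubleForm] using this
  · intro hx
    have : (x, (0 : V)) ∈ orthSet (doubleForm β) (C : Set (V × V)) := by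
      intro c hc
      have := hx c.1 ⟨c.2, hc⟩
      simpa [doubleForm] using this
    rw [show ((x, (0:V)) ∈ C) ↔ ((x, (0:V)) ∈ (C : Set (V × V))) from Iff.rfl, hsd]
    exact this
end
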